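/- Let V be a finite-dimensional real inner product space, g ⊆ so(V) a Lie subalgebra, and V = V₁ ⊕ ⋯ ⊕ V_k an orthogonal direct sum decomposition into g-invariant subspaces, each of which is irreducible as a g-module. For each i let gᵢ := {A ∈ g : A|_{V_j} = 0 for all j ≠ i}, regarded via restriction as a Lie subalgebra of so(Vᵢ). Then K(g) is the internal direct sum over i of the extensions to V of the spaces K(gᵢ): every algebraic curvature tensor R on V with values in g decomposes uniquely as R = R₁ + ⋯ + R_k, where Rᵢ is the extension of an algebraic curvature tensor on Vᵢ with values in gᵢ. -/

import Mathlib

open scoped RealInnerProductSpace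

noncomputable section

attribute [local instance 100] LieRing.ofAssociativeRing

/-- The first Bianchi identity `b₁ R = 0` for an alternating bilinear map
`R : V × V → End V`. -/
def FirstBianchi {V : Type*} [NormedAddCommGroup V] [InnerProductSpace ℝ V]
    (R : V →ₗ[ℝ] V →ₗ[ℝ] Module.End ℝ V) : Prop :=
  ∀ X Y Z : V, R X Y Z + R Y Z X + R Z X Y = 0

/-- `R` is an algebraic curvature tensor with values in the set `g ⊆ End V`:
an alternating bilinear map `V × V → g` satisfying the first Bianchi identity. -/
def IsAlgCurv {V : Type*} [NormedAddCommGroup V] [InnerProductSpace ℝ V]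
    (g : Set (Module.End ℝ V)) (R : V →ₗ[ℝ] V →ₗ[ℝ] Module.End ℝ V) : Prop :=
  (∀ X : V, R X X = 0) ∧ (∀ X Y : V, R X Y ∈ g) ∧ FirstBianchi R

/-- `R` is the extension to `V` of an algebraic curvature tensor on the subspace `V₁`
with values in `g`: it has values in `g` and factors through the orthogonal
projection onto `V₁` in both arguments. -/
def IsExtCurv {V : Type*} [NormedAddCommGroup V] [InnerProductSpace ℝ V]
    [FiniteDimensional ℝ V] (V₁ : Submodule ℝ V) (g : Set (Module.End ℝ V))
    (R : V →ₗ[ℝ] V →ₗ[ℝ] Module.End ℝ V) : Prop :=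
  IsAlgCurv g R ∧
    ∀ X Y : V, R X Y = R ((Submodule.orthogonalProjectionOnto V₁ X : V)) ((Submodule.orthogonalProjectionOnto V₁ Y : V))

/-!
Pairing with a fourth vector turns `R` into a 4-tensor with the symmetries of a Riemannian
curvature tensor, in particular pair symmetry `⟪R X Y Z, W⟫ = ⟪R Z W X, Y⟫`. If `x ∈ Vᵢ` and
`y ∈ Vⱼ` with `i ≠ j`, then `‖R x y Z‖² = ⟪R Z (R x y Z) x, y⟫ = 0`, since `R Z (R x y Z) ∈ g`
preserves `Vᵢ`. So `R` has no mixed components, and by Bianchi `R x y` kills `Vᵢᗮ` for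
`x, y ∈ Vᵢ`. Hence `R` is the sum of its restrictions `R (Pᵢ ·) (Pᵢ ·)` to the summands, and
these are forced on any decomposition, because an extension from `Vⱼ` vanishes on `Vᵢ`.
-/

open Submodule

theorem pair_symm_of_bianchi {α : Type*} (q : α → α → α → α → ℝ)
    (h₁ : ∀ x y z w, q y x z w = -q x y z w) (h₂ : ∀ x y z w, q x y w z = -q x y z w)
    (hb : ∀ x y z w, q x y z w + q y z x w + q z x y w = 0) (x y z w : α) :
    q x y z w = q z w x y := by
  linarith [hb z y x w, hb w y x z, hb w z x y, hb w z y x, h₁ y x z w, h₂ y x w z, h₁ z x y w,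
    h₂ z x w y, h₂ z y w x, h₁ w x y z, h₁ w x z y, h₂ w x z y, h₁ w y z x, h₂ w y z x,
    h₁ w z x y, h₂ w z y x]

section Skew

variable {V : Type*} [NormedAddCommGroup V] [InnerProductSpace ℝ V] {g : Set (Module.End ℝ V)}

theorem apply_mem_orthogonal_of_invariant (hskew : ∀ A ∈ g, ∀ x y : V, ⟪A x, y⟫ = -⟪x, A y⟫)
    {U : Submodule ℝ V} (hU : ∀ A ∈ g, ∀ x ∈ U, A x ∈ U) {A : Module.End ℝ V} (hA : A ∈ g)
    {x : V} (hx : x ∈ Uᗮ) : A x ∈ Uᗮ := fun u hu =>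
  neg_eq_zero.mp ((hskew A hA u x).symm.trans (inner_right_of_mem_orthogonal (hU A hA u hu) hx))

namespace IsAlgCurv

variable {R : V →ₗ[ℝ] V →ₗ[ℝ] Module.End ℝ V}

theorem mono {g' : Set (Module.End ℝ V)} (hR : IsAlgCurv g R) (h : g ⊆ g') : IsAlgCurv g' R :=
  ⟨hR.1, fun X Y => h (hR.2.1 X Y), hR.2.2⟩

theorem apply_swap (hR : IsAlgCurv g R) (X Y : V) : R Y X = -R X Y := by
  have h := hR.1 (X + Y)
  simp only [map_add, LinearMap.add_apply, hR.1 X, hR.1 Y, zero_add, add_zero] at h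
  exact eq_neg_of_add_eq_zero_left h

theorem inner_apply_pair_symm (hR : IsAlgCurv g R)
    (hskew : ∀ A ∈ g, ∀ x y : V, ⟪A x, y⟫ = -⟪x, A y⟫) (X Y Z W : V) :
    ⟪R X Y Z, W⟫ = ⟪R Z W X, Y⟫ := by
  refine pair_symm_of_bianchi (fun X Y Z W => ⟪R X Y Z, W⟫) (fun X Y Z W => ?_)
    (fun X Y Z W => ?_) (fun X Y Z W => ?_) X Y Z W
  · rw [hR.apply_swap, LinearMap.neg_apply, inner_neg_left]
  · rw [hskew _ (hR.2.1 X Y), real_inner_comm]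
  · rw [← inner_add_left, ← inner_add_left, hR.2.2 X Y Z, inner_zero_left]

variable (hR : IsAlgCurv g R) (hskew : ∀ A ∈ g, ∀ x y : V, ⟪A x, y⟫ = -⟪x, A y⟫)
  {U : Submodule ℝ V} (hU : ∀ A ∈ g, ∀ x ∈ U, A x ∈ U)
include hR hskew hU

theorem apply_eq_zero_of_mem_orthogonal {x y : V} (hx : x ∈ U) (hy : y ∈ Uᗮ) : R x y = 0 := by
  ext Z
  have h : ⟪R x y Z, R x y Z⟫ = 0 := by
    rw [hR.inner_apply_pair_symm hskew]
    exact inner_right_of_mem_orthogonal (hU _ (hR.2.1 _ _) x hx) hy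
  simpa using h

theorem apply_apply_eq_zero_of_mem_orthogonal {x y z : V} (hx : x ∈ U) (hy : y ∈ U)
    (hz : z ∈ Uᗮ) : R x y z = 0 := by
  have hU' : ∀ A ∈ g, ∀ x ∈ Uᗮ, A x ∈ Uᗮ := fun A hA _ =>
    apply_mem_orthogonal_of_invariant hskew hU hA
  have h := hR.2.2 x y z
  rwa [hR.apply_eq_zero_of_mem_orthogonal hskew hU hy hz,
    hR.apply_eq_zero_of_mem_orthogonal hskew hU' hz (le_orthogonal_orthogonal U hx),
    LinearMap.zero_apply, LinearMap.zero_apply, add_zero, add_zero] at h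

theorem apply_apply_starProjection [U.HasOrthogonalProjection] {x y : V} (hx : x ∈ U)
    (hy : y ∈ U) (z : V) : R x y (U.starProjection z) = R x y z := by
  rw [← sub_eq_zero, ← map_sub, ← neg_sub, map_neg,
    hR.apply_apply_eq_zero_of_mem_orthogonal hskew hU hx hy (sub_starProjection_mem_orthogonal z),
    neg_zero]

theorem isExtCurv_compl₁₂_starProjection [FiniteDimensional ℝ V] :
    IsExtCurv U {A | A ∈ g ∧ ∀ z ∈ Uᗮ, A z = 0}
      (R.compl₁₂ (U.starProjection : V →ₗ[ℝ] V) (U.starProjection : V →ₗ[ℝ] V)) := by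
  have hP (X : V) : U.starProjection X ∈ U := U.starProjection_apply_mem X
  refine ⟨⟨fun X => hR.1 _, fun X Y => ⟨hR.2.1 _ _, fun z hz => ?_⟩, fun X Y Z => ?_⟩,
    fun X Y => ?_⟩
  · exact hR.apply_apply_eq_zero_of_mem_orthogonal hskew hU (hP X) (hP Y) hz
  · simp only [LinearMap.compl₁₂_apply, ContinuousLinearMap.coe_coe]
    rw [← hR.apply_apply_starProjection hskew hU (hP X) (hP Y),
      ← hR.apply_apply_starProjection hskew hU (hP Y) (hP Z),
      ← hR.apply_apply_starProjection hskew hU (hP Z) (hP X)]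
    exact hR.2.2 _ _ _
  · simp only [LinearMap.compl₁₂_apply, ContinuousLinearMap.coe_coe,
      coe_orthogonalProjectionOnto_apply, starProjection_eq_self_iff.mpr (hP _)]

end IsAlgCurv

end Skew

section Decomposition

variable {V : Type*} [NormedAddCommGroup V] [InnerProductSpace ℝ V] [FiniteDimensional ℝ V]

theorem IsExtCurv.mono {U : Submodule ℝ V} {g g' : Set (Module.End ℝ V)}
    {R : V →ₗ[ℝ] V →ₗ[ℝ] Module.End ℝ V} (hR : IsExtCurv U g R) (h : g ⊆ g') :
    IsExtCurv U g' R :=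
  ⟨hR.1.mono h, hR.2⟩

variable {M : Type*} [AddCommGroup M] [Module ℝ M] {ι : Type*} [Fintype ι]
  {Vs : ι → Submodule ℝ V} (hVs : OrthogonalFamily ℝ (fun i => Vs i) fun i => (Vs i).subtypeₗᵢ)
include hVs

theorem sum_compl₁₂_starProjection_eq (hspan : ⨆ i, Vs i = ⊤) (B : V →ₗ[ℝ] V →ₗ[ℝ] M)
    (hB : ∀ i j, i ≠ j → ∀ x ∈ Vs i, ∀ y ∈ Vs j, B x y = 0) :
    ∑ i, B.compl₁₂ ((Vs i).starProjection : V →ₗ[ℝ] V) ((Vs i).starProjection : V →ₗ[ℝ] V) =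
      B := by
  have hsum (x : V) : ∑ i, (Vs i).starProjection x = x :=
    hVs.sum_projection_of_mem_iSup x (by rw [hspan]; exact mem_top)
  ext X Y
  conv_rhs => rw [← hsum X, ← hsum Y]
  simp only [LinearMap.sum_apply, LinearMap.compl₁₂_apply, ContinuousLinearMap.coe_coe, map_sum]
  exact Finset.sum_congr rfl fun i _ => (Fintype.sum_eq_single i fun j hji =>
    hB j i hji _ ((Vs j).starProjection_apply_mem X) _ ((Vs i).starProjection_apply_mem Y)).symm

theorem eq_compl₁₂_starProjection_of_sum_eq (B : V →ₗ[ℝ] V →ₗ[ℝ] M)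
    (Bs : ι → V →ₗ[ℝ] V →ₗ[ℝ] M) (hsum : ∑ i, Bs i = B)
    (hBs : ∀ i X Y, Bs i X Y = Bs i ((Vs i).starProjection X) ((Vs i).starProjection Y)) (i : ι) :
    Bs i = B.compl₁₂ ((Vs i).starProjection : V →ₗ[ℝ] V) ((Vs i).starProjection : V →ₗ[ℝ] V) := by
  have hP (X : V) : (Vs i).starProjection X ∈ Vs i := (Vs i).starProjection_apply_mem X
  have hvanish (j : ι) (hji : j ≠ i) (X Y : V) :
      Bs j ((Vs i).starProjection X) ((Vs i).starProjection Y) = 0 := by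
    rw [hBs, ((Vs j).starProjection_apply_eq_zero_iff).mpr ((hVs.isOrtho hji).symm.le (hP X)),
      map_zero, LinearMap.zero_apply]
  ext X Y
  simp only [← hsum, LinearMap.compl₁₂_apply, ContinuousLinearMap.coe_coe, LinearMap.sum_apply]
  rw [Fintype.sum_eq_single i fun j hji => hvanish j hji X Y, ← hBs]

end Decomposition

theorem curv_direct_sum_decomposition_of_irreducibles_general
    {V : Type*} [NormedAddCommGroup V] [InnerProductSpace ℝ V] [FiniteDimensional ℝ V]
    {k : ℕ}
    (g : LieSubalgebra ℝ (Module.End ℝ V))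
    (hskew : ∀ A ∈ g, ∀ x y : V, ⟪A x, y⟫ = -⟪x, A y⟫)
    (Vs : Fin k → Submodule ℝ V)
    (horth : ∀ i j, i ≠ j → ∀ x ∈ Vs i, ∀ y ∈ Vs j, ⟪x, y⟫ = 0)
    (hspan : (⨆ i, Vs i) = ⊤)
    (hinv : ∀ i, ∀ A ∈ g, ∀ x ∈ Vs i, A x ∈ Vs i) :
    ∀ R : V →ₗ[ℝ] V →ₗ[ℝ] Module.End ℝ V,
      IsAlgCurv (↑g : Set (Module.End ℝ V)) R →
      ∃! Rs : Fin k → (V →ₗ[ℝ] V →ₗ[ℝ] Module.End ℝ V),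
        (∀ i, IsExtCurv (Vs i)
          {A : Module.End ℝ V | A ∈ g ∧ ∀ j, j ≠ i → ∀ x ∈ Vs j, A x = 0} (Rs i)) ∧
        R = ∑ i, Rs i := by
  intro R hR
  have hVs : OrthogonalFamily ℝ (fun i => Vs i) fun i => (Vs i).subtypeₗᵢ :=
    OrthogonalFamily.of_pairwise fun i j hij => isOrtho_iff_inner_eq.mpr (horth i j hij)
  refine ⟨fun i => R.compl₁₂ ((Vs i).starProjection : V →ₗ[ℝ] V)
      ((Vs i).starProjection : V →ₗ[ℝ] V), ⟨fun i => ?_, ?_⟩, ?_⟩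
  · exact (hR.isExtCurv_compl₁₂_starProjection hskew (hinv i)).mono fun A ⟨hA, hAi⟩ =>
      ⟨hA, fun j hji x hx => hAi x ((hVs.isOrtho hji).le hx)⟩
  · refine (sum_compl₁₂_starProjection_eq hVs hspan R fun i j hij x hx y hy => ?_).symm
    exact hR.apply_eq_zero_of_mem_orthogonal hskew (hinv i) hx ((hVs.isOrtho hij).symm.le hy)
  · rintro Rs ⟨hRs, hsum⟩
    funext i
    refine eq_compl₁₂_starProjection_of_sum_eq hVs R Rs hsum.symm (fun j X Y => ?_) i
    simpa using (hRs j).2 X Y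

/-- Let `g ⊆ so(V)` be a Lie subalgebra and `V = V₁ ⊕ ⋯ ⊕ V_k` an orthogonal
decomposition into irreducible `g`-invariant subspaces.  With
`gᵢ = {A ∈ g : A|_{V_j} = 0 for j ≠ i}`, the space `K(g)` is the internal direct sum
of the extensions of the spaces `K(gᵢ)`. -/
theorem curv_direct_sum_decomposition_of_irreducibles
    {V : Type*} [NormedAddCommGroup V] [InnerProductSpace ℝ V] [FiniteDimensional ℝ V]
    {k : ℕ}
    (g : LieSubalgebra ℝ (Module.End ℝ V))
    (hskew : ∀ A ∈ g, ∀ x y : V, ⟪A x, y⟫ = -⟪x, A y⟫)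
    (Vs : Fin k → Submodule ℝ V)
    (horth : ∀ i j, i ≠ j → ∀ x ∈ Vs i, ∀ y ∈ Vs j, ⟪x, y⟫ = 0)
    (hspan : (⨆ i, Vs i) = ⊤)
    (hinv : ∀ i, ∀ A ∈ g, ∀ x ∈ Vs i, A x ∈ Vs i)
    (hirr : ∀ i, Vs i ≠ ⊥ ∧
      ∀ U : Submodule ℝ V, U ≤ Vs i → (∀ A ∈ g, ∀ x ∈ U, A x ∈ U) → U = ⊥ ∨ U = Vs i) :
    ∀ R : V →ₗ[ℝ] V →ₗ[ℝ] Module.End ℝ V,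
      IsAlgCurv (↑g : Set (Module.End ℝ V)) R →
      ∃! Rs : Fin k → (V →ₗ[ℝ] V →ₗ[ℝ] Module.End ℝ V),
        (∀ i, IsExtCurv (Vs i)
          {A : Module.End ℝ V | A ∈ g ∧ ∀ j, j ≠ i → ∀ x ∈ Vs j, A x = 0} (Rs i)) ∧
        R = ∑ i, Rs i :=
  curv_direct_sum_decomposition_of_irreducibles_general g hskew Vs horth hspan hinv

end
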